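/- arXiv:2404.18560 — 2 statements merged into one kernel-verified Lean document; each statement's English description precedes it below -/
import Mathlib

section
/- Let h : ℝᵈ → ℝ be differentiable with L-Lipschitz continuous gradient (equivalently, h(y) ≤ h(x) + ⟨∇h(x), y−x⟩ + (L/2)‖y−x‖² for all x,y), let S ⊆ ℝᵈ be nonempty, ψ : ℝᵈ → ℝ any function, H ∈ ℝ^{d×d} symmetric. Let x ∈ S and suppose x⁺ ∈ S minimizes y ↦ h(x) + ⟨∇h(x), y − x⟩ + ψ(y) + ½‖y − x‖²_H over y ∈ S. Then h(x) + ψ(x) ≥ h(x⁺) + ψ(x⁺) + ½‖x⁺ − x‖²_{H − L·I}. -/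
/-
The step is the three-point comparison: testing the minimality of `x⁺` against `y = x` bounds
`⟨∇h(x), x⁺ − x⟩ + ψ(x⁺) + ½‖x⁺ − x‖²_H` by `ψ(x)`, and the descent inequality bounds
`h(x⁺) − h(x)` by `⟨∇h(x), x⁺ − x⟩ + (L/2)‖x⁺ − x‖²`; adding the two and absorbing
`L‖x⁺ − x‖² = ‖x⁺ − x‖²_{LI}` into the quadratic form gives the estimate.
-/

open Matrix RealInnerProductSpace

variable {d : ℕ}

/-- The quadratic form `v ↦ vᵀMv` of a matrix `M`, evaluated on a Euclidean vector;
`‖v‖²_M = vᵀMv`. -/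
noncomputable def quadForm (M : Matrix (Fin d) (Fin d) ℝ) (v : EuclideanSpace ℝ (Fin d)) : ℝ :=
  (fun i => v i) ⬝ᵥ (M *ᵥ fun i => v i)

namespace quadForm

@[simp]
theorem zero_right (M : Matrix (Fin d) (Fin d) ℝ) : quadForm M 0 = 0 := by
  simp [quadForm]

theorem one_left (v : EuclideanSpace ℝ (Fin d)) : quadForm 1 v = ‖v‖ ^ 2 := by
  rw [← real_inner_self_eq_norm_sq, quadForm, one_mulVec, PiLp.inner_apply, dotProduct]
  simp only [RCLike.inner_apply, conj_trivial]

theorem sub_left (M N : Matrix (Fin d) (Fin d) ℝ) (v : EuclideanSpace ℝ (Fin d)) :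
    quadForm (M - N) v = quadForm M v - quadForm N v := by
  simp only [quadForm, sub_mulVec, dotProduct_sub]

theorem smul_left (c : ℝ) (M : Matrix (Fin d) (Fin d) ℝ) (v : EuclideanSpace ℝ (Fin d)) :
    quadForm (c • M) v = c * quadForm M v := by
  simp only [quadForm, smul_mulVec, dotProduct_smul, smul_eq_mul]

theorem sub_smul_one (M : Matrix (Fin d) (Fin d) ℝ) (c : ℝ) (v : EuclideanSpace ℝ (Fin d)) :
    quadForm (M - c • 1) v = quadForm M v - c * ‖v‖ ^ 2 := by
  rw [sub_left, smul_left, one_left]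

end quadForm

theorem stmt11_general (h : EuclideanSpace ℝ (Fin d) → ℝ) (L : ℝ)
    (hdesc : ∀ x y : EuclideanSpace ℝ (Fin d),
      h y ≤ h x + ⟪gradient h x, y - x⟫ + (L / 2) * ‖y - x‖ ^ 2)
    (S : Set (EuclideanSpace ℝ (Fin d)))
    (ψ : EuclideanSpace ℝ (Fin d) → ℝ)
    (H : Matrix (Fin d) (Fin d) ℝ)
    (x xp : EuclideanSpace ℝ (Fin d)) (hx : x ∈ S)
    (hmin : ∀ y ∈ S,
      h x + ⟪gradient h x, xp - x⟫ + ψ xp + (1 / 2) * quadForm H (xp - x)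
        ≤ h x + ⟪gradient h x, y - x⟫ + ψ y + (1 / 2) * quadForm H (y - x)) :
    h x + ψ x ≥ h xp + ψ xp + (1 / 2) * quadForm (H - L • 1) (xp - x) := by
  have hprox := hmin x hx
  simp only [sub_self, inner_zero_right, quadForm.zero_right] at hprox
  have hdescent := hdesc x xp
  rw [quadForm.sub_smul_one]
  linarith

/-- Descent estimate for the linearized proximal step: if `h` is differentiable with
`L`-Lipschitz gradient (in the equivalent form of the descent inequality), `S ⊆ ℝᵈ` is
nonempty, `ψ` arbitrary, `H` symmetric, `x ∈ S`, and `x⁺ ∈ S` minimizes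
`y ↦ h(x) + ⟨∇h(x), y−x⟩ + ψ(y) + ½‖y−x‖²_H` over `S`, then
`h(x) + ψ(x) ≥ h(x⁺) + ψ(x⁺) + ½‖x⁺−x‖²_{H−LI}`. -/
theorem stmt11 (h : EuclideanSpace ℝ (Fin d) → ℝ) (L : ℝ)
    (hdiff : Differentiable ℝ h)
    (hdesc : ∀ x y : EuclideanSpace ℝ (Fin d),
      h y ≤ h x + ⟪gradient h x, y - x⟫ + (L / 2) * ‖y - x‖ ^ 2)
    (S : Set (EuclideanSpace ℝ (Fin d))) (hS : S.Nonempty)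
    (ψ : EuclideanSpace ℝ (Fin d) → ℝ)
    (H : Matrix (Fin d) (Fin d) ℝ) (hH : H.IsSymm)
    (x xp : EuclideanSpace ℝ (Fin d)) (hx : x ∈ S) (hxp : xp ∈ S)
    (hmin : ∀ y ∈ S,
      h x + ⟪gradient h x, xp - x⟫ + ψ xp + (1 / 2) * quadForm H (xp - x)
        ≤ h x + ⟪gradient h x, y - x⟫ + ψ y + (1 / 2) * quadForm H (y - x)) :
    h x + ψ x ≥ h xp + ψ xp + (1 / 2) * quadForm (H - L • 1) (xp - x) :=
  stmt11_general h L hdesc S ψ H x xp hx hmin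
end

section
/- Let F : ℝᵃ × ℝᵃ × ℝᵇ → ℝ be differentiable and bounded below by F*, and G : ℝᵃ × ℝᵃ → ℝ differentiable and bounded below by G*. Assume: (i) for all p, t and all q, q′, F(p, q′, t) ≤ F(p, q, t) + ⟨∇_q F(p,q,t), q′ − q⟩ + (L_{F,q}/2)‖q′ − q‖², and similarly for G with constant L_{G,q}; (ii) for all p, q and all t, t′, ‖∇_q F(p,q,t) − ∇_q F(p,q,t′)‖ ≤ L_F ‖t − t′‖. Let H₂ ∈ ℝ^{a×a}, β > 0 with β ≥ (4/3)(L_{F,q} + L_{G,q}). Given p⁺, q⁺, q ∈ ℝᵃ and t⁺, t ∈ ℝᵇ, set λ⁺ = −∇_q F(p⁺, q⁺, t) − ∇_q G(p⁺, q⁺) − H₂(q⁺ − q) and Φ⁺ = F(p⁺,q⁺,t⁺) + G(p⁺,q⁺) − ⟨λ⁺, p⁺ − q⁺⟩ + (β/2)‖p⁺ − q⁺‖² + (4/β)‖H₂(q⁺ − q)‖² + (4L_F²/β)‖t⁺ − t‖². Then Φ⁺ ≥ F* + G*. -/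
open Matrix RealInnerProductSpace

variable {a b : ℕ}

/-- Matrix–vector multiplication acting on Euclidean vectors. -/
noncomputable def matVec (M : Matrix (Fin a) (Fin a) ℝ) (v : EuclideanSpace ℝ (Fin a)) :
    EuclideanSpace ℝ (Fin a) :=
  (WithLp.equiv 2 (Fin a → ℝ)).symm (M *ᵥ (WithLp.equiv 2 (Fin a → ℝ) v))

/-- Partial gradient `∇_q F(p,q,t)` with respect to the second block. -/
noncomputable def gradQ (F : EuclideanSpace ℝ (Fin a) → EuclideanSpace ℝ (Fin a) →
    EuclideanSpace ℝ (Fin b) → ℝ) (p q : EuclideanSpace ℝ (Fin a))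
    (t : EuclideanSpace ℝ (Fin b)) : EuclideanSpace ℝ (Fin a) :=
  gradient (fun q' => F p q' t) q

/-- Partial gradient `∇_q G(p,q)` with respect to the second block. -/
noncomputable def gradQG (G : EuclideanSpace ℝ (Fin a) → EuclideanSpace ℝ (Fin a) → ℝ)
    (p q : EuclideanSpace ℝ (Fin a)) : EuclideanSpace ℝ (Fin a) :=
  gradient (fun q' => G p q') q

/-- Lemma 5.2 of the paper: the merit function `Φ⁺` of PieADMM, where the multiplier
`λ⁺` comes from the first-order optimality condition of the `q`-subproblem, is bounded
below by the sum of the infima `F* + G*` of the two objective terms, provided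
`β ≥ (4/3)(L_{F,q} + L_{G,q})`. -/
theorem stmt13
    (F : EuclideanSpace ℝ (Fin a) → EuclideanSpace ℝ (Fin a) → EuclideanSpace ℝ (Fin b) → ℝ)
    (G : EuclideanSpace ℝ (Fin a) → EuclideanSpace ℝ (Fin a) → ℝ)
    (Fs Gs LFq LGq LF : ℝ)
    (hFdiff : Differentiable ℝ
      (fun x : EuclideanSpace ℝ (Fin a) × EuclideanSpace ℝ (Fin a) × EuclideanSpace ℝ (Fin b) =>
        F x.1 x.2.1 x.2.2))
    (hGdiff : Differentiable ℝ
      (fun x : EuclideanSpace ℝ (Fin a) × EuclideanSpace ℝ (Fin a) => G x.1 x.2))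
    (hFbd : ∀ p q t, Fs ≤ F p q t) (hGbd : ∀ p q, Gs ≤ G p q)
    (hFdesc : ∀ (p q q' : EuclideanSpace ℝ (Fin a)) (t : EuclideanSpace ℝ (Fin b)),
      F p q' t ≤ F p q t + ⟪gradQ F p q t, q' - q⟫ + (LFq / 2) * ‖q' - q‖ ^ 2)
    (hGdesc : ∀ p q q' : EuclideanSpace ℝ (Fin a),
      G p q' ≤ G p q + ⟪gradQG G p q, q' - q⟫ + (LGq / 2) * ‖q' - q‖ ^ 2)
    (hFlipt : ∀ (p q : EuclideanSpace ℝ (Fin a)) (t t' : EuclideanSpace ℝ (Fin b)),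
      ‖gradQ F p q t - gradQ F p q t'‖ ≤ LF * ‖t - t'‖)
    (H2 : Matrix (Fin a) (Fin a) ℝ) (β : ℝ) (hβ : 0 < β)
    (hβ2 : (4 / 3) * (LFq + LGq) ≤ β)
    (pp q qp : EuclideanSpace ℝ (Fin a)) (t tp : EuclideanSpace ℝ (Fin b))
    (lamp : EuclideanSpace ℝ (Fin a)) (Phip : ℝ)
    (hlamp : lamp = -gradQ F pp qp t - gradQG G pp qp - matVec H2 (qp - q))
    (hPhip : Phip = F pp qp tp + G pp qp - ⟪lamp, pp - qp⟫ + (β / 2) * ‖pp - qp‖ ^ 2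
      + (4 / β) * ‖matVec H2 (qp - q)‖ ^ 2 + (4 * LF ^ 2 / β) * ‖tp - t‖ ^ 2) :
    Fs + Gs ≤ Phip := by
  have hF1 := hFdesc pp qp pp tp
  have hG1 := hGdesc pp qp pp
  have hFs := hFbd pp pp tp
  have hGs := hGbd pp pp
  have hlam : ⟪lamp, pp - qp⟫ = -⟪gradQ F pp qp t, pp - qp⟫ - ⟪gradQG G pp qp, pp - qp⟫
      - ⟪matVec H2 (qp - q), pp - qp⟫ := by
    rw [hlamp, inner_sub_left, inner_sub_left, inner_neg_left]
  have hcs1 : ⟪gradQ F pp qp tp, pp - qp⟫ - ⟪gradQ F pp qp t, pp - qp⟫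
      ≤ LF * ‖tp - t‖ * ‖pp - qp‖ := by
    rw [← inner_sub_left]
    calc ⟪gradQ F pp qp tp - gradQ F pp qp t, pp - qp⟫
        ≤ ‖gradQ F pp qp tp - gradQ F pp qp t‖ * ‖pp - qp‖ := real_inner_le_norm _ _
      _ ≤ LF * ‖tp - t‖ * ‖pp - qp‖ :=
          mul_le_mul_of_nonneg_right (hFlipt pp qp tp t) (norm_nonneg _)
  have hcs2 : -⟪matVec H2 (qp - q), pp - qp⟫ ≤ ‖matVec H2 (qp - q)‖ * ‖pp - qp‖ := by
    have := real_inner_le_norm (-(matVec H2 (qp - q))) (pp - qp)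
    simpa [inner_neg_left] using this
  have key : ∀ X Y : ℝ, X * Y ≤ 4 / β * X ^ 2 + β / 16 * Y ^ 2 := by
    intro X Y
    have heq : 4 / β * X ^ 2 + β / 16 * Y ^ 2 - X * Y = (2 * X - β / 4 * Y) ^ 2 / β := by
      field_simp; ring
    nlinarith [div_nonneg (sq_nonneg (2 * X - β / 4 * Y)) hβ.le]
  have k1 := key ‖matVec H2 (qp - q)‖ ‖pp - qp‖
  have k2 := key (LF * ‖tp - t‖) ‖pp - qp‖
  have hcoef : (0:ℝ) ≤ 3 * β / 8 - (LFq + LGq) / 2 := by linarith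
  have k2' : LF * ‖tp - t‖ * ‖pp - qp‖
      ≤ 4 * LF ^ 2 / β * ‖tp - t‖ ^ 2 + β / 16 * ‖pp - qp‖ ^ 2 := by
    have : 4 / β * (LF * ‖tp - t‖) ^ 2 = 4 * LF ^ 2 / β * ‖tp - t‖ ^ 2 := by
      field_simp
    linarith [k2, this.le, this.ge]
  have hq : 0 ≤ (3 * β / 8 - (LFq + LGq) / 2) * ‖pp - qp‖ ^ 2 :=
    mul_nonneg hcoef (sq_nonneg _)
  rw [hPhip, hlam]
  nlinarith [hq, hF1, hG1, hFs, hGs, hcs1, hcs2, k1, k2']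
end
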